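/- Let k ≥ 2 and let H = (V, E) be a k-uniform 2-regular hypergraph on n vertices. Suppose W ⊆ V is a set of vertices such that no edge of H contains two distinct vertices of W. Then H has an independent set of size at least n + |W| − 2n/k; that is, α(H) ≥ n + |W| − 2n/k. -/

import Mathlib

/-!
Double counting incidences gives `k * |E| = 2n`. Since no edge contains two vertices of `W`,
exactly `2|W|` edges meet `W`, so `W` together with one vertex from each of the remaining
`|E| - 2|W|` edges is a transversal of size at most `|E| - |W|`, and its complement is
independent.
-/

open Finset

section

variable {V : Type*} [DecidableEq V]

theorem card_mul_eq_card_mul_degree [Fintype V] {E : Finset (Finset V)} {k d : ℕ}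
    (huniform : ∀ e ∈ E, #e = k) (hregular : ∀ v, #{e ∈ E | v ∈ e} = d) :
    k * #E = Fintype.card V * d := by
  rw [← sum_card hregular, sum_const_nat huniform, mul_comm]

theorem card_filter_not_disjoint_eq {E : Finset (Finset V)} {d : ℕ}
    {W : Finset V} (hregular : ∀ v ∈ W, #{e ∈ E | v ∈ e} = d)
    (hW : ∀ e ∈ E, ∀ v ∈ W, ∀ w ∈ W, v ∈ e → w ∈ e → v = w) :
    #{e ∈ E | ¬Disjoint W e} = #W * d := by
  have hunion : {e ∈ E | ¬Disjoint W e} = W.biUnion fun w => {e ∈ E | w ∈ e} := by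
    ext e
    simp only [mem_filter, mem_biUnion, not_disjoint_iff]
    grind
  rw [hunion, card_biUnion, sum_const_nat hregular]
  intro v hv w hw hvw
  simp only [Function.onFun, disjoint_left, mem_filter]
  exact fun e ⟨he, hve⟩ ⟨_, hwe⟩ => hvw (hW e he v hv w hw hve hwe)

theorem exists_card_le_forall_not_disjoint {F : Finset (Finset V)}
    (hF : ∀ e ∈ F, e.Nonempty) : ∃ T : Finset V, #T ≤ #F ∧ ∀ e ∈ F, ¬Disjoint T e := by
  induction F using Finset.induction_on with
  | empty => exact ⟨∅, by simp⟩
  | insert e F he ih =>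
    obtain ⟨T, hTcard, hT⟩ := ih fun f hf => hF f (mem_insert_of_mem hf)
    obtain ⟨v, hv⟩ := hF e (mem_insert_self e F)
    refine ⟨insert v T, ?_, ?_⟩
    · rw [card_insert_of_notMem he]
      exact (card_insert_le v T).trans (by omega)
    · simp only [forall_mem_insert, disjoint_insert_left, not_and_or, not_not]
      exact ⟨Or.inl hv, fun f hf => Or.inr (hT f hf)⟩

theorem exists_transversal_card_add_le {E : Finset (Finset V)} {d : ℕ}
    {W : Finset V} (hne : ∀ e ∈ E, e.Nonempty) (hregular : ∀ v ∈ W, #{e ∈ E | v ∈ e} = d)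
    (hW : ∀ e ∈ E, ∀ v ∈ W, ∀ w ∈ W, v ∈ e → w ∈ e → v = w) :
    ∃ T : Finset V, #T + d * #W ≤ #E + #W ∧ ∀ e ∈ E, ¬Disjoint T e := by
  obtain ⟨T, hTcard, hT⟩ :=
    exists_card_le_forall_not_disjoint (F := {e ∈ E | Disjoint W e})
      fun e he => hne e (mem_filter.mp he).1
  refine ⟨W ∪ T, ?_, fun e he => ?_⟩
  · have hsplit := card_filter_add_card_filter_not (s := E) (Disjoint W)
    rw [card_filter_not_disjoint_eq hregular hW] at hsplit
    linarith [card_union_le W T, mul_comm d #W]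
  · rw [disjoint_union_left, not_and_or]
    by_cases hWe : Disjoint W e
    · exact Or.inr (hT e (mem_filter.mpr ⟨he, hWe⟩))
    · exact Or.inl hWe

end

/-- Let `k ≥ 2` and let `H = (V, E)` be a `k`-uniform `2`-regular
hypergraph on `n` vertices. Suppose `W ⊆ V` is such that no edge of `H` contains two
distinct vertices of `W`. Then `H` has an independent set of size at least
`n + |W| − 2n/k`. -/
theorem independence_lower_bound_of_two_regular {V : Type*} [Fintype V] [DecidableEq V]
    (k : ℕ) (hk : 2 ≤ k) (E : Finset (Finset V))
    (huniform : ∀ e ∈ E, e.card = k)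
    (hregular : ∀ v : V, (E.filter (fun e => v ∈ e)).card = 2)
    (W : Finset V)
    (hW : ∀ e ∈ E, ∀ v ∈ W, ∀ w ∈ W, v ∈ e → w ∈ e → v = w) :
    ∃ I : Finset V, (∀ e ∈ E, ¬ e ⊆ I) ∧
      (Fintype.card V : ℝ) + W.card - 2 * Fintype.card V / k ≤ I.card := by
  have hne : ∀ e ∈ E, e.Nonempty := fun e he => card_pos.mp (by rw [huniform e he]; omega)
  obtain ⟨T, hTcard, hT⟩ := exists_transversal_card_add_le hne (fun v _ => hregular v) hW
  refine ⟨Tᶜ, fun e he hsub => hT e he (subset_compl_iff_disjoint_left.mp hsub), ?_⟩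
  have hcount : (k : ℝ) * #E = Fintype.card V * 2 := by
    exact_mod_cast card_mul_eq_card_mul_degree huniform hregular
  have hE : (#E : ℝ) = 2 * Fintype.card V / k := by
    rw [eq_div_iff (by positivity)]
    linarith
  rw [card_compl, Nat.cast_sub (card_le_univ T), ← hE]
  have : (#T : ℝ) + 2 * #W ≤ #E + #W := by exact_mod_cast hTcard
  linarith
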